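/- arXiv:2012.06758 — 2 statements merged into one kernel-verified Lean document; each statement's English description precedes it below -/
import Mathlib

section
/- If p is a non-constant polynomial over ℂ that has a non-zero root of multiplicity n (for n a positive integer), then p has at least n+1 non-zero coefficients (i.e., at least n+1 terms in its monomial expansion). -/
open Polynomial

lemma support_X_pow_mul' (k : ℕ) (q : Polynomial ℂ) :
    (X ^ k * q).support = q.support.image (· + k) := by
  ext m
  simp only [Finset.mem_image, mem_support_iff, coeff_X_pow_mul']
  constructor
  · intro h
    split_ifs at h with hk
    · exact ⟨m - k, h, by omega⟩
    · exact absurd rfl h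
  · rintro ⟨i, hi, rfl⟩
    simpa using hi

lemma card_support_derivative_lt (q : Polynomial ℂ) (h0 : q.coeff 0 ≠ 0) :
    (derivative q).support.card < q.support.card := by
  have hsub : ∀ m ∈ (derivative q).support, m + 1 ∈ q.support.erase 0 := by
    intro m hm
    rw [mem_support_iff, coeff_derivative] at hm
    rw [Finset.mem_erase, mem_support_iff]
    refine ⟨by omega, fun h => hm (by simp [h])⟩
  have := Finset.card_le_card_of_injOn (fun m => m + 1) hsub
    (fun a _ b _ h => by simpa using h)
  have h0' : 0 ∈ q.support := mem_support_iff.mpr h0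
  have := Finset.card_erase_of_mem h0'
  have hpos : 0 < q.support.card := Finset.card_pos.mpr ⟨0, h0'⟩
  omega

lemma main_aux (α : ℂ) (hα : α ≠ 0) : ∀ n : ℕ, 0 < n → ∀ p : Polynomial ℂ, p ≠ 0 →
    p.rootMultiplicity α = n → n + 1 ≤ p.support.card := by
  intro n
  induction n with
  | zero => omega
  | succ n ih =>
    intro _ p hp hmult
    -- reduce to q with nonzero constant coefficient
    set k := p.natTrailingDegree with hk
    have hdvd : (X : Polynomial ℂ) ^ k ∣ p :=
      X_pow_dvd_iff.mpr fun d hd => coeff_eq_zero_of_lt_natTrailingDegree hd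
    obtain ⟨q, hq⟩ := hdvd
    have hq0 : q ≠ 0 := by rintro rfl; simp at hq; exact hp hq
    have hXk : (X : Polynomial ℂ) ^ k ≠ 0 := pow_ne_zero _ X_ne_zero
    have htd : q.natTrailingDegree = 0 := by
      have := natTrailingDegree_mul (p := (X : Polynomial ℂ) ^ k) (q := q) hXk hq0
      rw [← hq, natTrailingDegree_X_pow] at this
      omega
    have hc0 : q.coeff 0 ≠ 0 := by
      have := trailingCoeff_nonzero_iff_nonzero.mpr hq0
      rwa [trailingCoeff, htd] at this
    have hcard : p.support.card = q.support.card := by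
      rw [hq, support_X_pow_mul']
      exact Finset.card_image_of_injective _ (fun a b h => by omega)
    have hmq : q.rootMultiplicity α = n + 1 := by
      have hXroot : ¬ IsRoot ((X : Polynomial ℂ) ^ k) α := by
        simp [IsRoot, hα]
      have := rootMultiplicity_mul (x := α) (hq ▸ hp)
      rw [← hq, rootMultiplicity_eq_zero hXroot] at this
      omega
    have hroot : q.IsRoot α := by
      have := (rootMultiplicity_pos hq0 (x := α)).mp (by omega)
      exact this
    rcases Nat.eq_zero_or_pos n with hn0 | hn0
    · -- base case: n+1 = 1
      subst hn0
      by_contra h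
      push_neg at h
      have hcases : q.support.card = 0 ∨ q.support.card = 1 := by omega
      rcases hcases with h' | h'
      · exact hq0 (Polynomial.support_eq_empty.mp (Finset.card_eq_zero.mp h'))
      · obtain ⟨m, c, hc, rfl⟩ := Polynomial.card_support_eq_one.mp h'
        have hm : m = 0 := by
          by_contra hm
          exact hc0 (by simp only [coeff_C_mul, coeff_X_pow]; rw [if_neg (fun h => hm h.symm)]; ring)
        subst hm
        simp only [pow_zero, mul_one, IsRoot, eval_C] at hroot
        exact hc hroot
    · have hd0 : derivative q ≠ 0 := by
        intro hd
        have := derivative_rootMultiplicity_of_root hroot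
        rw [hd, rootMultiplicity_zero, hmq] at this
        omega
      have hmd : (derivative q).rootMultiplicity α = n := by
        have := derivative_rootMultiplicity_of_root hroot
        rw [hmq] at this; omega
      have := ih hn0 (derivative q) hd0 hmd
      have := card_support_derivative_lt q hc0
      omega

/-- If `p` is a non-constant polynomial over `ℂ` that has a non-zero root of
multiplicity `n` (i.e. `(X - α)^n ∣ p` but `(X - α)^(n+1) ∤ p`) for a positive
integer `n`, then `p` has at least `n + 1` non-zero coefficients. -/
theorem stmt_0 (p : Polynomial ℂ) (hp : p.natDegree ≠ 0) (n : ℕ) (hn : 0 < n)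
    (α : ℂ) (hα : α ≠ 0)
    (h1 : (X - C α) ^ n ∣ p) (h2 : ¬ (X - C α) ^ (n + 1) ∣ p) :
    n + 1 ≤ p.support.card := by
  have hp0 : p ≠ 0 := by rintro rfl; exact h2 (dvd_zero _)
  have hmult : p.rootMultiplicity α = n := by
    have h1' := (le_rootMultiplicity_iff hp0).mpr h1
    have h2' : p.rootMultiplicity α < n + 1 := by
      by_contra h
      push_neg at h
      exact h2 ((pow_dvd_pow _ h).trans (pow_rootMultiplicity_dvd p α))
    omega
  exact main_aux α hα n hn p hp0 hmult
end

section
/- Let p(z) = Σ_{l∈I} B_l z^{m_l} + C be a polynomial over ℂ, where I is a finite index set of cardinality at most n, the exponents m_l are distinct positive integers, and B_l ≠ 0 for all l ∈ I and C ≠ 0. Then every root of p has multiplicity at most n. -/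
/-!
Dividing out the largest power of `X` changes neither the number of terms nor the multiplicity of
a root `a ≠ 0`, and leaves a nonzero constant term. Differentiating then lowers the multiplicity
at `a` by exactly one and kills the constant term, so the number of terms drops. Hence the
multiplicity of a nonzero root is less than the number of terms, which is at most `n + 1`; and
`0` is not a root at all since `C ≠ 0`.
-/

open Polynomial

namespace Polynomial

variable {R : Type*}

lemma card_support_X_pow_mul [Semiring R] (k : ℕ) (q : R[X]) :
    (X ^ k * q).support.card = q.support.card := by
  have hsupp : (X ^ k * q).support = q.support.map (addRightEmbedding k) := by
    ext i
    simp only [Finset.mem_map, mem_support_iff, addRightEmbedding_apply, coeff_X_pow_mul']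
    constructor
    · intro hi
      have hki : k ≤ i := by by_contra h; exact hi (if_neg h)
      exact ⟨i - k, by rwa [if_pos hki] at hi, Nat.sub_add_cancel hki⟩
    · rintro ⟨j, hj, rfl⟩
      simpa using hj
  rw [hsupp, Finset.card_map]

lemma card_support_derivative_lt [Semiring R] {q : R[X]} (h0 : q.coeff 0 ≠ 0) :
    (derivative q).support.card < q.support.card := by
  have hmaps : Set.MapsTo (· + 1) (derivative q).support (q.support.erase 0) := by
    intro i hi
    simp only [Finset.mem_coe, mem_support_iff, coeff_derivative] at hi ⊢
    exact Finset.mem_erase.mpr ⟨i.succ_ne_zero, mem_support_iff.mpr (left_ne_zero_of_mul hi)⟩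
  calc (derivative q).support.card
      ≤ (q.support.erase 0).card :=
        Finset.card_le_card_of_injOn _ hmaps (add_left_injective 1).injOn
    _ < q.support.card := Finset.card_erase_lt_of_mem (mem_support_iff.mpr h0)

lemma card_support_sum_C_mul_X_pow_le [Semiring R] {ι : Type*} (I : Finset ι) (B : ι → R)
    (m : ι → ℕ) : (∑ l ∈ I, C (B l) * X ^ m l).support.card ≤ I.card := by
  classical
  have hsupp : (∑ l ∈ I, C (B l) * X ^ m l).support ⊆ I.image m := by
    intro k hk
    rw [mem_support_iff, finsetSum_coeff] at hk
    obtain ⟨l, hl, hne⟩ := Finset.exists_ne_zero_of_sum_ne_zero hk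
    rw [coeff_C_mul_X_pow] at hne
    exact Finset.mem_image.mpr ⟨l, hl, (of_not_not fun h => hne (if_neg h)).symm⟩
  exact (Finset.card_le_card hsupp).trans Finset.card_image_le

lemma card_support_add_C_le [Semiring R] (p : R[X]) (c : R) :
    (p + C c).support.card ≤ p.support.card + 1 :=
  calc (p + C c).support.card
      ≤ (p.support ∪ (C c).support).card := Finset.card_le_card support_add
    _ ≤ p.support.card + (C c).support.card := Finset.card_union_le _ _
    _ ≤ p.support.card + 1 := by
        gcongr
        exact (Finset.card_le_card (support_C_subset c)).trans_eq (Finset.card_singleton 0)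

theorem rootMultiplicity_lt_card_support [CommRing R] [IsDomain R] [CharZero R] {p : R[X]}
    (hp : p ≠ 0) {a : R} (ha : a ≠ 0) : p.rootMultiplicity a < p.support.card := by
  obtain ⟨q, hpq, hq⟩ := exists_eq_pow_rootMultiplicity_mul_and_not_dvd p hp 0
  set k := p.rootMultiplicity 0
  rw [C_0, sub_zero] at hpq hq
  have hq0 : q ≠ 0 := by rintro rfl; exact hq (dvd_zero X)
  have hqcoeff : q.coeff 0 ≠ 0 := by rwa [X_dvd_iff] at hq
  have hmult : p.rootMultiplicity a = q.rootMultiplicity a := by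
    have hXk : ¬ (X ^ k : R[X]).IsRoot a := by simp [ha]
    rw [hpq, rootMultiplicity_mul (hpq ▸ hp), rootMultiplicity_eq_zero hXk, zero_add]
  have hcard : p.support.card = q.support.card := by rw [hpq, card_support_X_pow_mul]
  rw [hmult, hcard]
  by_cases hroot : q.IsRoot a
  · have hq' : derivative q ≠ 0 := by
      intro h
      rw [eq_C_of_derivative_eq_zero h, IsRoot, eval_C] at hroot
      exact hqcoeff hroot
    have hdec := card_support_derivative_lt hqcoeff
    have ih := rootMultiplicity_lt_card_support hq' ha
    rw [derivative_rootMultiplicity_of_root hroot] at ih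
    omega
  · rw [rootMultiplicity_eq_zero hroot]
    exact Finset.card_pos.mpr (nonempty_support_iff.mpr hq0)
termination_by p.support.card
decreasing_by omega

end Polynomial

theorem stmt_1_general {ι : Type*} (n : ℕ) (I : Finset ι) (hI : I.card ≤ n)
    (m : ι → ℕ) (hm : ∀ l ∈ I, 1 ≤ m l)
    (B : ι → ℂ) (c : ℂ) (hc : c ≠ 0) :
    ∀ α : ℂ,
      rootMultiplicity α (∑ l ∈ I, C (B l) * X ^ (m l) + Polynomial.C c) ≤ n := by
  intro α
  set p : ℂ[X] := ∑ l ∈ I, C (B l) * X ^ (m l) + Polynomial.C c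
  have hp0 : p.eval 0 = c := by
    have hterm : ∀ l ∈ I, (C (B l) * X ^ m l).eval 0 = 0 := fun l hl => by
      simp [zero_pow (Nat.one_le_iff_ne_zero.mp (hm l hl))]
    simp only [p, eval_add, eval_finsetSum, Finset.sum_eq_zero hterm, eval_C, zero_add]
  by_cases hα : α = 0
  · subst hα
    rw [rootMultiplicity_eq_zero (by rwa [IsRoot, hp0])]
    exact Nat.zero_le n
  · have hp : p ≠ 0 := fun h => hc (by rw [← hp0, h, eval_zero])
    have hcard : p.support.card ≤ n + 1 :=
      (card_support_add_C_le _ c).trans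
        (Nat.add_le_add_right ((card_support_sum_C_mul_X_pow_le I B m).trans hI) 1)
    have := rootMultiplicity_lt_card_support hp hα
    omega

/-- If `p(z) = ∑_{l ∈ I} B_l z^(m_l) + C` with `|I| ≤ n`, distinct positive exponents
`m_l`, all `B_l ≠ 0` and `C ≠ 0`, then every root of `p` has multiplicity at most `n`. -/
theorem stmt_1 {ι : Type*} (n : ℕ) (I : Finset ι) (hI : I.card ≤ n)
    (m : ι → ℕ) (hm : ∀ l ∈ I, 1 ≤ m l) (hminj : Set.InjOn m I)
    (B : ι → ℂ) (hB : ∀ l ∈ I, B l ≠ 0) (c : ℂ) (hc : c ≠ 0) :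
    ∀ α : ℂ,
      rootMultiplicity α (∑ l ∈ I, C (B l) * X ^ (m l) + Polynomial.C c) ≤ n :=
  stmt_1_general n I hI m hm B c hc
end
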